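/- arXiv:1710.01036 — 6 statements merged into one kernel-verified Lean document; each statement's English description precedes it below -/
import Mathlib

section
/- Let p be an odd prime, r ≥ 1 an integer, q = p^r, and let k, j be integers with k > q+3, 0 ≤ j ≤ q−2, j+(q−1) ≤ k−2, and k−2 < j+2(q−1). Set α = C(k−2−j, j), β = C(k−1−j−q, j), and γ = C(k−2−j, q−1) + (−1)^{j+1}·C(k−2−j, j+q−1) as integers. Let K be an algebraic closure of the rational function field F_p(t), t the image in K of the indeterminate, and let ᾱ, β̄, γ̄ ∈ K denote the images of α, β, γ under reduction modulo p. Then the 2×2 matrix M = [[(−1)^j·ᾱ·t^{j+1}, −γ̄·t^{j+q}], [(−1)^j·β̄·t^{j+1}, 0]] is diagonalizable over K. -/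
/-!
The matrix has the shape `[[a tᵉ, b tᶠ], [c tᵉ, 0]]` with `a, b, c ∈ 𝔽_p` and `e ≠ f`. As `t`
is transcendental, the discriminant `a² t²ᵉ + 4bc tᵉ⁺ᶠ` vanishes only when `a = 0` and
`bc = 0`, so the matrix is diagonalizable (triangular if `c = 0`, with two distinct eigenvalues
otherwise) as soon as `a = 0` forces `b` and `c` to vanish together.

Writing `k - 2 - j = (q - 1) + m` with `m < q - 1`, Lucas' theorem in base `q` gives, for
`m ≥ 1`, `α ≡ C(m - 1, j)`, `β ≡ C(m - 1, j - 1) + C(m - 1, j)` and `γ ≡ ±C(m - 1, j - 1)`,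
so `α ≡ 0` forces `β ≡ ±γ`; for `m = 0`, `α = C(q - 1, j) ≡ (-1)ʲ ≠ 0`.
-/

open Matrix

/-- A square matrix over a commutative ring is diagonalizable if it is conjugate,
by an invertible matrix, to a diagonal matrix. -/
def Matrix.IsDiagonalizable {n R : Type*} [Fintype n] [DecidableEq n] [CommRing R]
    (M : Matrix n n R) : Prop :=
  ∃ P : Matrix n n R, IsUnit P ∧ (P⁻¹ * M * P).IsDiag

namespace Matrix

variable {n K : Type*} [Fintype n] [DecidableEq n] [Field K]

theorem IsDiagonalizable.of_mul_eq_mul {M P D : Matrix n n K} (hP : IsUnit P.det)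
    (hD : D.IsDiag) (h : M * P = P * D) : M.IsDiagonalizable := by
  refine ⟨P, (isUnit_iff_isUnit_det P).mpr hP, ?_⟩
  rwa [mul_assoc, h, ← mul_assoc, nonsing_inv_mul P hP, one_mul]

theorem IsDiag.isDiagonalizable {M : Matrix n n K} (hM : M.IsDiag) : M.IsDiagonalizable :=
  ⟨1, isUnit_one, by simpa using hM⟩

theorem isDiagonalizable_of_second_row_eq_zero {a b : K} (h : a ≠ 0 ∨ b = 0) :
    (!![a, b; 0, 0]).IsDiagonalizable := by
  rcases h with ha | rfl
  · refine .of_mul_eq_mul (P := !![1, -b; 0, a]) (D := diagonal ![a, 0])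
      (by simpa using ha) (isDiag_diagonal _) ?_
    ext i j
    fin_cases i <;> fin_cases j <;> simp [mul_apply, Fin.sum_univ_two]
    ring
  · apply IsDiag.isDiagonalizable
    intro i j hij
    fin_cases i <;> fin_cases j <;> simp_all

theorem isDiagonalizable_of_ne_of_roots {a b c μ ν : K} (hc : c ≠ 0) (hμν : μ ≠ ν)
    (hμ : μ ^ 2 = a * μ + b * c) (hν : ν ^ 2 = a * ν + b * c) :
    (!![a, b; c, 0]).IsDiagonalizable := by
  refine .of_mul_eq_mul (P := !![μ, ν; c, c]) (D := diagonal ![μ, ν]) ?_ (isDiag_diagonal _) ?_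
  · simpa [det_fin_two_of, ← sub_mul] using mul_ne_zero (sub_ne_zero.mpr hμν) hc
  · ext i j
    fin_cases i <;> fin_cases j <;> simp [mul_apply, Fin.sum_univ_two] <;>
      first | linear_combination -hμ | linear_combination -hν

theorem isDiagonalizable_of_discr_ne_zero [IsAlgClosed K] {a b c : K} (hc : c ≠ 0)
    (h2 : (2 : K) ≠ 0) (hdisc : a ^ 2 + 4 * b * c ≠ 0) : (!![a, b; c, 0]).IsDiagonalizable := by
  obtain ⟨d, hd⟩ := IsAlgClosed.exists_pow_nat_eq (a ^ 2 + 4 * b * c) two_pos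
  have hd0 : d ≠ 0 := by rintro rfl; simp_all
  refine isDiagonalizable_of_ne_of_roots (μ := (a + d) / 2) (ν := (a - d) / 2) hc ?_ ?_ ?_
  · intro h
    have h2d : 2 * d = 0 := by linear_combination (div_left_inj' h2).mp h
    exact hd0 ((mul_eq_zero.mp h2d).resolve_left h2)
  all_goals field_simp; linear_combination hd

end Matrix

open Polynomial in
theorem Transcendental.eq_zero_of_algebraMap_mul_pow_add_eq_zero {F K : Type*} [Field F]
    [Field K] [Algebra F K] {t : K} (ht : Transcendental F t) {x y : F} {e f : ℕ} (hef : e ≠ f)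
    (h : algebraMap F K x * t ^ e + algebraMap F K y * t ^ f = 0) : x = 0 ∧ y = 0 := by
  have hP := transcendental_iff.mp ht (C x * X ^ e + C y * X ^ f) (by simpa using h)
  exact ⟨by simpa [hef] using congrArg (coeff · e) hP,
    by simpa [hef.symm] using congrArg (coeff · f) hP⟩

theorem Matrix.isDiagonalizable_of_transcendental {F K : Type*} [Field F] [Field K] [Algebra F K]
    [IsAlgClosed K] (h2 : (2 : F) ≠ 0) {t : K} (ht : Transcendental F t) {a b c : F} {e f : ℕ}
    (hef : e ≠ f) (habc : a = 0 → (c = 0 ↔ b = 0)) :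
    (!![algebraMap F K a * t ^ e, algebraMap F K b * t ^ f;
        algebraMap F K c * t ^ e, 0]).IsDiagonalizable := by
  have ht0 : t ≠ 0 := by rintro rfl; exact ht isAlgebraic_zero
  by_cases hc : c = 0
  · simp only [hc, map_zero, zero_mul]
    apply isDiagonalizable_of_second_row_eq_zero
    by_cases ha : a = 0
    · simp [(habc ha).mp hc]
    · exact .inl (by simp [ha, ht0])
  have h2K : (2 : K) ≠ 0 := by
    rw [← map_ofNat (algebraMap F K) 2]
    exact (map_ne_zero _).mpr h2
  refine isDiagonalizable_of_discr_ne_zero (by simp [hc, ht0]) h2K fun hdisc ↦ ?_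
  obtain ⟨ha, hbc⟩ := ht.eq_zero_of_algebraMap_mul_pow_add_eq_zero (x := a ^ 2)
    (y := 4 * b * c) (e := 2 * e) (f := e + f) (by omega)
    (by rw [← hdisc]; simp only [map_mul, map_pow, map_ofNat]; ring)
  have h4 : (4 : F) ≠ 0 := by rw [show (4 : F) = 2 * 2 by norm_num]; exact mul_ne_zero h2 h2
  have hb : b = 0 := by simpa [h4, hc] using hbc
  exact hc ((habc (pow_eq_zero_iff two_ne_zero |>.mp ha)).mpr hb)

namespace ZMod

variable {p : ℕ} [Fact p.Prime]

theorem natCast_choose_eq_mod_mul_div (n k : ℕ) :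
    (n.choose k : ZMod p) = (n % p).choose (k % p) * (n / p).choose (k / p) := by
  exact_mod_cast (natCast_eq_natCast_iff _ _ _).mpr
    Choose.choose_modEq_choose_mod_mul_choose_div_nat

theorem natCast_choose_pow_mul_add (r e f : ℕ) {s u : ℕ} (hs : s < p ^ r) (hu : u < p ^ r) :
    ((p ^ r * e + s).choose (p ^ r * f + u) : ZMod p) = e.choose f * s.choose u := by
  induction r generalizing s u with
  | zero => simp_all
  | succ r ih =>
    have hp : 0 < p := (Fact.out : p.Prime).pos
    have hdigit (x v : ℕ) : p ^ (r + 1) * x + v = p * (p ^ r * x + v / p) + v % p := by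
      rw [pow_succ]; nth_rw 1 [← Nat.div_add_mod v p]; ring
    have hdiv {v : ℕ} (hv : v < p ^ (r + 1)) : v / p < p ^ r :=
      Nat.div_lt_of_lt_mul (by rwa [← pow_succ'])
    rw [natCast_choose_eq_mod_mul_div, hdigit e s, hdigit f u, Nat.mul_add_div hp,
      Nat.mul_add_div hp, Nat.mul_add_mod, Nat.mul_add_mod, Nat.div_eq_of_lt (Nat.mod_lt _ hp),
      Nat.div_eq_of_lt (Nat.mod_lt _ hp), Nat.mod_mod, Nat.mod_mod, add_zero, add_zero,
      ih (hdiv hs) (hdiv hu), natCast_choose_eq_mod_mul_div s u]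
    ring

theorem natCast_choose_pow_sub_one (r : ℕ) {j : ℕ} (hj : j < p ^ r) :
    ((p ^ r - 1).choose j : ZMod p) = (-1) ^ j := by
  induction j with
  | zero => simp
  | succ j ih =>
    have hpascal := Nat.choose_succ_succ' (p ^ r - 1) j
    rw [Nat.sub_add_cancel (Nat.one_le_of_lt hj)] at hpascal
    have hdvd : (p : ZMod p) ∣ ((p ^ r).choose (j + 1) : ZMod p) :=
      Nat.cast_dvd_cast ((Fact.out : p.Prime).dvd_choose_pow j.succ_ne_zero hj.ne)
    rw [natCast_self, zero_dvd_iff, hpascal, Nat.cast_add, ih (by omega)] at hdvd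
    linear_combination hdvd

theorem natCast_choose_eq_zero_iff_of_natCast_choose_eq_zero (r : ℕ) {j m : ℕ} (hj : j < p ^ r)
    (hm : m < p ^ r - 1) (hα : ((p ^ r - 1 + m).choose j : ZMod p) = 0) :
    (m.choose j : ZMod p) = 0 ↔
      ((p ^ r - 1 + m).choose (p ^ r - 1) : ZMod p) +
        (-1) ^ (j + 1) * (p ^ r - 1 + m).choose (j + p ^ r - 1) = 0 := by
  obtain _ | i := j
  · simp at hα
  obtain _ | s := m
  · rw [add_zero, natCast_choose_pow_sub_one r hj] at hα
    exact absurd hα (pow_ne_zero _ (neg_ne_zero.mpr one_ne_zero))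
  have hs : s < p ^ r := by omega
  rw [show p ^ r - 1 + (s + 1) = p ^ r * 1 + s by omega] at hα ⊢
  have hα' : ((p ^ r * 1 + s).choose (i + 1) : ZMod p) = s.choose (i + 1) := by
    simpa using natCast_choose_pow_mul_add r 1 0 hs hj
  have hγ₁ : ((p ^ r * 1 + s).choose (p ^ r - 1) : ZMod p) = 0 := by
    simpa [Nat.choose_eq_zero_of_lt (show s < p ^ r - 1 by omega)] using
      natCast_choose_pow_mul_add r 1 0 hs (u := p ^ r - 1) (by omega)
  have hγ₂ : ((p ^ r * 1 + s).choose (i + 1 + p ^ r - 1) : ZMod p) = s.choose i := by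
    rw [show i + 1 + p ^ r - 1 = p ^ r * 1 + i by omega,
      natCast_choose_pow_mul_add r 1 1 hs (by omega)]
    simp
  rw [hα'] at hα
  rw [hγ₁, hγ₂, Nat.choose_succ_succ', Nat.cast_add, hα]
  simp [pow_succ]

end ZMod

theorem stmt0_general (p r : ℕ) [Fact p.Prime] (hodd : Odd p)
    (q : ℕ) (hq : q = p ^ r)
    (k j : ℕ) (hj : j ≤ q - 2)
    (hjk : j + (q - 1) ≤ k - 2) (hjk' : k - 2 < j + 2 * (q - 1))
    (α β γ : ℤ)
    (hα : α = (k - 2 - j).choose j)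
    (hβ : β = (k - 1 - j - q).choose j)
    (hγ : γ = (k - 2 - j).choose (q - 1) + (-1) ^ (j + 1) * (k - 2 - j).choose (j + q - 1))
    (K : Type*) [Field K] [Algebra (RatFunc (ZMod p)) K] [IsAlgClosure (RatFunc (ZMod p)) K]
    (t : K) (ht : t = algebraMap (RatFunc (ZMod p)) K RatFunc.X) :
    Matrix.IsDiagonalizable
      !![(-1 : K) ^ j * (α : K) * t ^ (j + 1), -(γ : K) * t ^ (j + q);
         (-1 : K) ^ j * (β : K) * t ^ (j + 1), 0] := by
  subst hq
  have : CharP K p := charP_of_injective_algebraMap (algebraMap (RatFunc (ZMod p)) K).injective p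
  let : Algebra (ZMod p) K := ZMod.algebra K p
  have : IsScalarTower (ZMod p) (RatFunc (ZMod p)) K := .of_algebraMap_eq' (Subsingleton.elim _ _)
  have : IsAlgClosed K := IsAlgClosure.isAlgClosed (RatFunc (ZMod p))
  have htr : Transcendental (ZMod p) t := by
    rw [ht, transcendental_algebraMap_iff (algebraMap (RatFunc (ZMod p)) K).injective]
    exact RatFunc.transcendental_X
  have h2 : (2 : ZMod p) ≠ 0 := Ring.two_ne_zero (by
    rw [ZMod.ringChar_zmod_n]; rintro rfl; exact (Nat.not_even_iff_odd.mpr hodd) even_two)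
  have hn : k - 2 - j = p ^ r - 1 + (k - 1 - j - p ^ r) := by omega
  have hkey := ZMod.natCast_choose_eq_zero_iff_of_natCast_choose_eq_zero (p := p) r (j := j)
    (m := k - 1 - j - p ^ r) (by omega) (by omega)
  rw [hn] at hα hγ
  have hαβγ : (α : ZMod p) = 0 → ((β : ZMod p) = 0 ↔ (γ : ZMod p) = 0) := by
    subst hα hβ hγ
    push_cast
    exact hkey
  have := Matrix.isDiagonalizable_of_transcendental (K := K) h2 htr (a := (-1) ^ j * (α : ZMod p))
    (b := -(γ : ZMod p)) (c := (-1) ^ j * (β : ZMod p)) (e := j + 1) (f := j + p ^ r) (by omega)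
    (by simpa using hαβγ)
  simpa using this

/-- In odd characteristic, for `k > q + 3`, any two-element class `C_j` gives a
diagonalizable block `M_j` of the Atkin operator `U_t`. -/
theorem stmt0 (p r : ℕ) [Fact p.Prime] (hodd : Odd p) (hr : 1 ≤ r)
    (q : ℕ) (hq : q = p ^ r)
    (k j : ℕ) (hk : q + 3 < k) (hj : j ≤ q - 2)
    (hjk : j + (q - 1) ≤ k - 2) (hjk' : k - 2 < j + 2 * (q - 1))
    (α β γ : ℤ)
    (hα : α = (k - 2 - j).choose j)
    (hβ : β = (k - 1 - j - q).choose j)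
    (hγ : γ = (k - 2 - j).choose (q - 1) + (-1) ^ (j + 1) * (k - 2 - j).choose (j + q - 1))
    (K : Type*) [Field K] [Algebra (RatFunc (ZMod p)) K] [IsAlgClosure (RatFunc (ZMod p)) K]
    (t : K) (ht : t = algebraMap (RatFunc (ZMod p)) K RatFunc.X) :
    Matrix.IsDiagonalizable
      !![(-1 : K) ^ j * (α : K) * t ^ (j + 1), -(γ : K) * t ^ (j + q);
         (-1 : K) ^ j * (β : K) * t ^ (j + 1), 0] :=
  stmt0_general p r hodd q hq k j hj hjk hjk' α β γ hα hβ hγ K t ht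
end

section
/- Let r ≥ 1 be an integer, q = 2^r, and let k, j be integers with k > q+3, 0 ≤ j ≤ q−2, j+(q−1) ≤ k−2, and k−2 < j+2(q−1). Set α = C(k−2−j, j), β = C(k−1−j−q, j), and γ = C(k−2−j, q−1) + C(k−2−j, j+q−1) as integers. Let K be an algebraic closure of the rational function field F_2(t), t the image in K of the indeterminate, and let ᾱ, β̄, γ̄ ∈ K denote the images of α, β, γ under reduction modulo 2. Then the 2×2 matrix M = [[ᾱ·t^{j+1}, γ̄·t^{j+q}], [β̄·t^{j+1}, 0]] is diagonalizable over K if and only if α is odd or β is even. In particular, if k is even then M is diagonalizable over K. -/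
/-!
Reduced mod 2 the entries are `ᾱ`, `β̄` and `γ̄ = ᾱ + β̄`; the last congruence, like the others on
binomial coefficients, comes from `(1 + X) ^ (2 ^ r + m) = (1 + X ^ 2 ^ r) (1 + X) ^ m` over `𝔽₂`,
the top entry `k - 2 - j` lying between `2 ^ r - 1` and `2 ^ (r + 1) - 2`. Of the four parity
patterns, three give a diagonal or triangular matrix with distinct diagonal entries. The pattern
`ᾱ = 0`, `β̄ = 1` gives `!![0, y; x, 0]` with `x, y ≠ 0`: in characteristic 2 a diagonalizable
`2 × 2` matrix of trace zero has equal eigenvalues, so it would be scalar. For even `k`, the last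
binary digit in Lucas's theorem shows that `β` is even whenever `α` is.
-/

open Matrix

section Binomial

variable {p : ℕ} [Fact p.Prime] {r m i : ℕ}

open Polynomial in
theorem cast_choose_prime_pow_add :
    ((p ^ r + m).choose i : ZMod p) =
      m.choose i + if p ^ r ≤ i then (m.choose (i - p ^ r) : ZMod p) else 0 := by
  have h : ((X + 1 : (ZMod p)[X]) ^ (p ^ r + m)) = X ^ p ^ r * (X + 1) ^ m + (X + 1) ^ m := by
    rw [pow_add, add_pow_char_pow, one_pow, add_mul, one_mul]
  have := congrArg (coeff · i) h
  simp only [coeff_add, coeff_X_pow_mul', coeff_X_add_one_pow] at this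
  rw [this, add_comm]

theorem cast_choose_prime_pow_add_of_lt (hi : i < p ^ r) :
    ((p ^ r + m).choose i : ZMod p) = m.choose i := by
  simp [cast_choose_prime_pow_add, hi.not_ge]

theorem cast_choose_prime_pow_add_prime_pow_add (hm : m < p ^ r) :
    ((p ^ r + m).choose (p ^ r + i) : ZMod p) = m.choose i := by
  simp [cast_choose_prime_pow_add, Nat.choose_eq_zero_of_lt (hm.trans_le (Nat.le_add_right _ i))]

theorem cast_choose_prime_pow_sub_one {j : ℕ} (hj : j < p ^ r) :
    ((p ^ r - 1).choose j : ZMod p) = (-1) ^ j := by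
  obtain ⟨N, hN⟩ := Nat.exists_eq_add_one.mpr (pow_pos (Fact.out : p.Prime).pos r)
  rw [hN, Nat.add_sub_cancel]
  induction j with
  | zero => simp
  | succ j ih =>
    have hvanish : ((N + 1).choose (j + 1) : ZMod p) = 0 := by
      simpa [hN] using cast_choose_prime_pow_add_of_lt (m := 0) hj
    rw [Nat.choose_succ_succ', Nat.cast_add, ih (by omega)] at hvanish
    linear_combination hvanish

end Binomial

-- `choose (2a) (2b)` and `choose (2a+1) (2b)` are both `≡ choose a b`, while
-- `choose (2a+2) (2b+1) ≡ choose 0 1 * _ = 0`.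
theorem even_choose_succ_of_even_choose {m j : ℕ} (hmj : Even (m + j))
    (h : Even (m.choose j)) : Even ((m + 1).choose j) := by
  have lucas (n : ℕ) := Choose.choose_modEq_choose_mod_mul_choose_div_nat (p := 2) (n := n) (k := j)
  rw [Nat.even_iff] at h ⊢
  obtain ⟨a, rfl | rfl⟩ := Nat.even_or_odd' m
  · obtain ⟨b, rfl⟩ : ∃ b, j = 2 * b := by rcases hmj with ⟨c, hc⟩; exact ⟨c - a, by omega⟩
    have h0 := lucas (2 * a)
    have h1 := lucas (2 * a + 1)
    norm_num [Nat.ModEq, Nat.mul_add_div, Nat.mul_add_mod] at h0 h1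
    omega
  · obtain ⟨b, rfl⟩ : ∃ b, j = 2 * b + 1 := by rcases hmj with ⟨c, hc⟩; exact ⟨c - a - 1, by omega⟩
    have h1 := lucas (2 * (a + 1))
    norm_num [Nat.ModEq, Nat.mul_add_div, Nat.mul_add_mod] at h1
    omega

section TwoPow

variable {r n j : ℕ}

theorem choose_add_choose_modEq (hj : j < 2 ^ r) (hn : 2 ^ r ≤ n + 1) (hn' : n + 1 < 2 * 2 ^ r) :
    n.choose (2 ^ r - 1) + n.choose (j + 2 ^ r - 1) ≡
      n.choose j + (n + 1 - 2 ^ r).choose j [MOD 2] := by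
  rw [← ZMod.natCast_eq_natCast_iff]
  push_cast
  rcases hn.eq_or_lt with hn | hn
  · obtain rfl : n = 2 ^ r - 1 := by omega
    rw [← hn, Nat.sub_self, Nat.choose_self, cast_choose_prime_pow_sub_one hj]
    rcases j with _ | i
    · simp
    · rw [Nat.choose_eq_zero_of_lt (by omega), Nat.choose_eq_zero_of_lt (by omega)]
      simp [show (-1 : ZMod 2) = 1 from rfl]
  · obtain ⟨m, rfl⟩ : ∃ m, n = 2 ^ r + m := ⟨n - 2 ^ r, by omega⟩
    have hvanish : ((2 ^ r + m).choose (2 ^ r - 1) : ZMod 2) = 0 := by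
      rw [cast_choose_prime_pow_add_of_lt (Nat.sub_one_lt (by positivity)),
        Nat.choose_eq_zero_of_lt (by omega : m < 2 ^ r - 1), Nat.cast_zero]
    rw [hvanish, zero_add, show 2 ^ r + m + 1 - 2 ^ r = m + 1 by omega,
      cast_choose_prime_pow_add_of_lt hj]
    rcases j with _ | i
    · simpa [CharTwo.add_self_eq_zero] using hvanish
    · rw [show i + 1 + 2 ^ r - 1 = 2 ^ r + i by omega,
        cast_choose_prime_pow_add_prime_pow_add (by omega), Nat.choose_succ_succ', Nat.cast_add,
        add_left_comm, CharTwo.add_self_eq_zero, add_zero]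

theorem odd_choose_or_even_choose (hj : j < 2 ^ r) (hn : 2 ^ r ≤ n + 1)
    (hn' : n + 1 < 2 * 2 ^ r) (heven : Even (n + j)) :
    Odd (n.choose j) ∨ Even ((n + 1 - 2 ^ r).choose j) := by
  rcases hn.eq_or_lt with hn | hn
  · left
    obtain rfl : n = 2 ^ r - 1 := by omega
    rw [← ZMod.natCast_eq_one_iff_odd, cast_choose_prime_pow_sub_one hj]
    simp [show (-1 : ZMod 2) = 1 from rfl]
  · obtain ⟨m, rfl⟩ : ∃ m, n = 2 ^ r + m := ⟨n - 2 ^ r, by omega⟩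
    have hr : r ≠ 0 := by rintro rfl; rw [pow_zero] at hn'; omega
    have hmj : Even (m + j) := by
      rw [add_assoc] at heven
      exact (Nat.even_add.mp heven).mp (Nat.even_pow.mpr ⟨even_two, hr⟩)
    rw [← ZMod.natCast_eq_one_iff_odd, cast_choose_prime_pow_add_of_lt hj,
      ZMod.natCast_eq_one_iff_odd, show 2 ^ r + m + 1 - 2 ^ r = m + 1 by omega,
      or_iff_not_imp_left, Nat.not_odd_iff_even]
    exact even_choose_succ_of_even_choose hmj

end TwoPow

namespace Matrix

section CommRing

variable {ι R : Type*} [Fintype ι] [DecidableEq ι] [CommRing R]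

theorem isDiagonalizable_of_mul_eq_one {P Q M : Matrix ι ι R} (hQP : Q * P = 1)
    (h : (Q * M * P).IsDiag) : M.IsDiagonalizable :=
  ⟨P, (isUnit_iff_isUnit_det P).mpr (isUnit_det_of_left_inverse hQP), by
    rwa [inv_eq_left_inv hQP]⟩

theorem IsDiag.isDiagonalizable_s1 {M : Matrix ι ι R} (h : M.IsDiag) : M.IsDiagonalizable :=
  isDiagonalizable_of_mul_eq_one (P := 1) (Q := 1) (mul_one 1) (by simpa)

theorem IsDiagonalizable.eq_smul_one_of_trace_eq_zero [CharP R 2] {M : Matrix (Fin 2) (Fin 2) R}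
    (hM : M.IsDiagonalizable) (htr : M.trace = 0) : ∃ d : R, M = d • 1 := by
  obtain ⟨P, hP, hD⟩ := hM
  have hPP : P * P⁻¹ = 1 := mul_nonsing_inv P ((isUnit_iff_isUnit_det P).mp hP)
  set D := P⁻¹ * M * P with hDdef
  have htrD : D 0 0 + D 1 1 = 0 := by
    rw [← trace_fin_two, hDdef, trace_mul_cycle, hPP, one_mul, htr]
  obtain ⟨d, hscalar⟩ : ∃ d : R, D = d • 1 := ⟨D 0 0, by
    ext i j
    fin_cases i <;> fin_cases j <;> simp [hD (by decide : (0 : Fin 2) ≠ 1),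
      hD (by decide : (1 : Fin 2) ≠ 0), CharTwo.add_eq_zero.mp htrD]⟩
  refine ⟨d, ?_⟩
  calc M = P * D * P⁻¹ := by
        rw [hDdef, ← mul_assoc, ← mul_assoc, hPP, one_mul, mul_assoc, hPP, mul_one]
    _ = d • 1 := by rw [hscalar, Matrix.mul_smul, mul_one, Matrix.smul_mul, hPP]

end CommRing

variable {K : Type*} [Field K]

theorem isDiagonalizable_fin_two_upper {x : K} (hx : x ≠ 0) (y : K) :
    !![x, y; 0, 0].IsDiagonalizable := by
  refine isDiagonalizable_of_mul_eq_one (P := !![1, -(y / x); 0, 1]) (Q := !![1, y / x; 0, 1])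
    (by simp [one_fin_two]) ?_
  convert isDiag_diagonal ![x, 0]
  ext i j
  fin_cases i <;> fin_cases j <;> simp [field]

theorem isDiagonalizable_fin_two_lower {x : K} (hx : x ≠ 0) (z : K) :
    !![x, 0; z, 0].IsDiagonalizable := by
  refine isDiagonalizable_of_mul_eq_one (P := !![1, 0; z / x, 1]) (Q := !![1, 0; -(z / x), 1])
    (by simp [one_fin_two]) ?_
  convert isDiag_diagonal ![x, 0]
  ext i j
  fin_cases i <;> fin_cases j <;> simp [field]

theorem not_isDiagonalizable_fin_two_antidiag [CharP K 2] {u : K} (hu : u ≠ 0) (v : K) :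
    ¬ !![0, u; v, 0].IsDiagonalizable := fun h => by
  obtain ⟨d, hd⟩ := h.eq_smul_one_of_trace_eq_zero (by simp [trace_fin_two])
  exact hu (by simpa using congrFun (congrFun hd 0) 1)

theorem isDiagonalizable_parity_block_iff [CharP K 2] {x y : K} (hx : x ≠ 0) (hy : y ≠ 0) (a b : ℕ) :
    !![(a : K) * x, ((a + b : ℕ) : K) * y; (b : K) * x, 0].IsDiagonalizable ↔ Odd a ∨ Even b := by
  have cast_even {n : ℕ} (h : Even n) : (n : K) = 0 := by
    rw [CharTwo.natCast_eq_ite, if_pos h]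
  have cast_odd {n : ℕ} (h : Odd n) : (n : K) = 1 := by
    rw [CharTwo.natCast_eq_ite, if_neg (Nat.not_even_iff_odd.mpr h)]
  rcases Nat.even_or_odd a with ha | ha <;> rcases Nat.even_or_odd b with hb | hb
  · refine iff_of_true (IsDiag.isDiagonalizable_s1 fun i j _ => ?_) (.inr hb)
    fin_cases i <;> fin_cases j <;> simp [cast_even ha, cast_even hb, cast_even (ha.add hb)]
  · refine iff_of_false ?_ (by simp [Nat.not_odd_iff_even.mpr ha, Nat.not_even_iff_odd.mpr hb])
    simpa [cast_even ha, cast_odd hb, cast_odd (ha.add_odd hb)]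
      using not_isDiagonalizable_fin_two_antidiag hy x
  · refine iff_of_true ?_ (.inl ha)
    simpa [cast_odd ha, cast_even hb, cast_odd (ha.add_even hb)]
      using isDiagonalizable_fin_two_upper hx y
  · refine iff_of_true ?_ (.inl ha)
    simpa [cast_odd ha, cast_odd hb, cast_even (ha.add_odd hb)]
      using isDiagonalizable_fin_two_lower hx x

end Matrix

theorem stmt1_general (r : ℕ) (q : ℕ) (hq : q = 2 ^ r)
    (k j : ℕ) (hj : j ≤ q - 2)
    (hjk : j + (q - 1) ≤ k - 2) (hjk' : k - 2 < j + 2 * (q - 1))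
    (α β γ : ℕ)
    (hα : α = (k - 2 - j).choose j)
    (hβ : β = (k - 1 - j - q).choose j)
    (hγ : γ = (k - 2 - j).choose (q - 1) + (k - 2 - j).choose (j + q - 1))
    (K : Type*) [Field K] [Algebra (RatFunc (ZMod 2)) K]
    (t : K) (ht : t = algebraMap (RatFunc (ZMod 2)) K RatFunc.X) :
    (Matrix.IsDiagonalizable
      !![(α : K) * t ^ (j + 1), (γ : K) * t ^ (j + q);
         (β : K) * t ^ (j + 1), 0] ↔ (Odd α ∨ Even β)) ∧
    (Even k → Matrix.IsDiagonalizable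
      !![(α : K) * t ^ (j + 1), (γ : K) * t ^ (j + q);
         (β : K) * t ^ (j + 1), 0]) := by
  subst hq hα hβ hγ
  have : CharP K 2 := charP_of_injective_algebraMap (algebraMap (RatFunc (ZMod 2)) K).injective 2
  have ht0 : t ≠ 0 := ht ▸ (_root_.map_ne_zero _).mpr RatFunc.X_ne_zero
  set n := k - 2 - j
  have hpos := Nat.one_le_two_pow (n := r)
  have hjr : j < 2 ^ r := by omega
  have hn : 2 ^ r ≤ n + 1 := by omega
  have hn' : n + 1 < 2 * 2 ^ r := by omega
  rw [show k - 1 - j - 2 ^ r = n + 1 - 2 ^ r by omega,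
    (CharP.natCast_eq_natCast K 2).mpr (choose_add_choose_modEq hjr hn hn'),
    isDiagonalizable_parity_block_iff (pow_ne_zero _ ht0) (pow_ne_zero _ ht0)]
  refine ⟨Iff.rfl, fun hk => odd_choose_or_even_choose hjr hn hn' ?_⟩
  obtain ⟨u, rfl⟩ := hk
  exact ⟨u - 1, by omega⟩

/-- In even characteristic, for `k > q + 3`, the two-element class block `M_j` of the
Atkin operator `U_t` is diagonalizable iff `α` is odd or `β` is even; in particular it
is diagonalizable when `k` is even. -/
theorem stmt1 (r : ℕ) (hr : 1 ≤ r) (q : ℕ) (hq : q = 2 ^ r)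
    (k j : ℕ) (hk : q + 3 < k) (hj : j ≤ q - 2)
    (hjk : j + (q - 1) ≤ k - 2) (hjk' : k - 2 < j + 2 * (q - 1))
    (α β γ : ℕ)
    (hα : α = (k - 2 - j).choose j)
    (hβ : β = (k - 1 - j - q).choose j)
    (hγ : γ = (k - 2 - j).choose (q - 1) + (k - 2 - j).choose (j + q - 1))
    (K : Type*) [Field K] [Algebra (RatFunc (ZMod 2)) K] [IsAlgClosure (RatFunc (ZMod 2)) K]
    (t : K) (ht : t = algebraMap (RatFunc (ZMod 2)) K RatFunc.X) :
    (Matrix.IsDiagonalizable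
      !![(α : K) * t ^ (j + 1), (γ : K) * t ^ (j + q);
         (β : K) * t ^ (j + 1), 0] ↔ (Odd α ∨ Even β)) ∧
    (Even k → Matrix.IsDiagonalizable
      !![(α : K) * t ^ (j + 1), (γ : K) * t ^ (j + q);
         (β : K) * t ^ (j + 1), 0]) :=
  stmt1_general r q hq k j hj hjk hjk' α β γ hα hβ hγ K t ht
end

section
/- Let p be a prime, r ≥ 1 an integer, q = p^r, let F = F_q(t) be the rational function field over the field with q elements, and let K be an algebraic closure of F. The 2×2 matrix M = [[0, −t^{q+1}], [−t², 0]] over F is diagonalizable over K if and only if q is odd. Moreover, when q is odd, M is similar over F itself to the diagonal matrix diag(t^{(q+3)/2}, −t^{(q+3)/2}), with eigenvectors ±t^{(q−1)/2}·e₁ + e₂ (where e₁, e₂ is the standard basis). -/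
/-!
For odd `q` the characteristic is not 2, so the vectors `(∓t^((q-1)/2), 1)` form a basis of `F²`
(their determinant is `-2 t^((q-1)/2)`); they are eigenvectors of `M` for `±t^((q+3)/2)` because
`M = [[0, -c u²], [-c, 0]]` with `c = t²`, `u = t^((q-1)/2)`. For even `q` the characteristic is 2,
where the eigenvalues `λ, -λ` of the traceless matrix `M` coincide: a diagonalizable `M` would be
scalar, contradicting `M₀₁ = -t^(q+1) ≠ 0`.
-/

open Matrix

namespace Matrix

variable {n R : Type*} [Fintype n] [DecidableEq n] [CommRing R]

theorem IsDiagonalizable.map {S : Type*} [CommRing S] {M : Matrix n n R}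
    (hM : M.IsDiagonalizable) (f : R →+* S) : (M.map f).IsDiagonalizable := by
  obtain ⟨P, hP, hD⟩ := hM
  have hinv : (P.map f)⁻¹ = P⁻¹.map f := by
    refine inv_eq_left_inv ?_
    rw [← Matrix.map_mul, nonsing_inv_mul P ((isUnit_iff_isUnit_det P).mp hP),
      Matrix.map_one _ f.map_zero f.map_one]
  refine ⟨P.map f, hP.map f.mapMatrix, ?_⟩
  rw [hinv, ← Matrix.map_mul, ← Matrix.map_mul]
  exact hD.map f.map_zero

theorem IsDiag.eq_scalar_of_trace_eq_zero [CharP R 2] {D : Matrix (Fin 2) (Fin 2) R}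
    (hD : D.IsDiag) (htr : D.trace = 0) : D = scalar (Fin 2) (D 0 0) := by
  have h11 : D 1 1 = D 0 0 := by
    rw [trace_fin_two, add_eq_zero_iff_eq_neg, CharTwo.neg_eq] at htr
    exact htr.symm
  ext i j
  fin_cases i <;> fin_cases j
  · simp
  · simpa using hD (show (0 : Fin 2) ≠ 1 by decide)
  · simpa using hD (show (1 : Fin 2) ≠ 0 by decide)
  · simpa using h11

theorem IsDiagonalizable.eq_scalar_of_trace_eq_zero [CharP R 2] {M : Matrix (Fin 2) (Fin 2) R}
    (hM : M.IsDiagonalizable) (htr : M.trace = 0) : ∃ c, M = scalar (Fin 2) c := by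
  obtain ⟨P, hP, hD⟩ := hM
  have hdet := (isUnit_iff_isUnit_det P).mp hP
  set c := (P⁻¹ * M * P) 0 0
  have hscalar : P⁻¹ * M * P = scalar (Fin 2) c :=
    hD.eq_scalar_of_trace_eq_zero (by rwa [trace_conj' hP])
  refine ⟨c, ?_⟩
  calc M = P * (P⁻¹ * M * P) * P⁻¹ := by
        rw [mul_assoc P⁻¹, mul_nonsing_inv_cancel_left _ _ hdet,
          mul_nonsing_inv_cancel_right _ _ hdet]
    _ = scalar (Fin 2) c := by
        rw [hscalar, ← (scalar_commute c (fun _ => Commute.all _ _) P).eq, mul_assoc,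
          mul_nonsing_inv _ hdet, mul_one]

theorem antidiag_mulVec_neg_vec (c u : R) :
    !![0, -(c * u ^ 2); -c, 0] *ᵥ ![-u, 1] = (c * u) • ![-u, 1] := by
  ext i; fin_cases i <;> simp [mulVec, dotProduct]; ring

theorem antidiag_mulVec_vec (c u : R) :
    !![0, -(c * u ^ 2); -c, 0] *ᵥ ![u, 1] = (-(c * u)) • ![u, 1] := by
  ext i; fin_cases i <;> simp [mulVec, dotProduct]; ring

theorem exists_diagonal_eq_conj_antidiag (c : R) {u : R} (hu : IsUnit (2 * u)) :
    ∃ P : Matrix (Fin 2) (Fin 2) R, IsUnit P ∧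
      diagonal ![c * u, -(c * u)] = P⁻¹ * !![0, -(c * u ^ 2); -c, 0] * P := by
  set P : Matrix (Fin 2) (Fin 2) R := !![-u, u; 1, 1]
  have hdet : IsUnit P.det := by
    rw [det_fin_two_of, show -u * 1 - u * 1 = -(2 * u) by ring]
    exact hu.neg
  have hMP : !![0, -(c * u ^ 2); -c, 0] * P = P * diagonal ![c * u, -(c * u)] := by
    ext i j; fin_cases i <;> fin_cases j <;> simp [P, mul_apply, Fin.sum_univ_two] <;> ring
  refine ⟨P, (isUnit_iff_isUnit_det P).mpr hdet, ?_⟩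
  rw [mul_assoc, hMP, nonsing_inv_mul_cancel_left _ _ hdet]

theorem antidiag_pow_diagonalization_of_odd {t : R} (ht : IsUnit t) (h2 : IsUnit (2 : R))
    {q : ℕ} (hq : Odd q) :
    (∃ P : Matrix (Fin 2) (Fin 2) R, IsUnit P ∧
        diagonal ![t ^ ((q + 3) / 2), -t ^ ((q + 3) / 2)] =
          P⁻¹ * !![0, -t ^ (q + 1); -t ^ 2, 0] * P) ∧
      !![0, -t ^ (q + 1); -t ^ 2, 0] *ᵥ ![-t ^ ((q - 1) / 2), 1] =
        t ^ ((q + 3) / 2) • ![-t ^ ((q - 1) / 2), 1] ∧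
      !![0, -t ^ (q + 1); -t ^ 2, 0] *ᵥ ![t ^ ((q - 1) / 2), 1] =
        (-t ^ ((q + 3) / 2)) • ![t ^ ((q - 1) / 2), 1] := by
  obtain ⟨m, rfl⟩ := hq
  have hentry : t ^ (2 * m + 1 + 1) = t ^ 2 * (t ^ m) ^ 2 := by ring
  have heigen : t ^ ((2 * m + 1 + 3) / 2) = t ^ 2 * t ^ m := by
    rw [show (2 * m + 1 + 3) / 2 = 2 + m by omega, pow_add]
  have hvec : (2 * m + 1 - 1) / 2 = m := by omega
  rw [hentry, heigen, hvec]
  exact ⟨exists_diagonal_eq_conj_antidiag _ (h2.mul (ht.pow m)),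
    antidiag_mulVec_neg_vec _ _, antidiag_mulVec_vec _ _⟩

end Matrix

theorem stmt2_general (p r : ℕ) [Fact p.Prime] (hr : 1 ≤ r) (q : ℕ) (hq : q = p ^ r)
    (K : Type*) [Field K] [Algebra (RatFunc (GaloisField p r)) K] :
    let F := RatFunc (GaloisField p r)
    let t : F := RatFunc.X
    let M : Matrix (Fin 2) (Fin 2) F := !![0, -t ^ (q + 1); -t ^ 2, 0]
    (Matrix.IsDiagonalizable (M.map (algebraMap F K)) ↔ Odd q) ∧
    (Odd q →
      (∃ P : Matrix (Fin 2) (Fin 2) F, IsUnit P ∧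
        Matrix.diagonal ![t ^ ((q + 3) / 2), -t ^ ((q + 3) / 2)] = P⁻¹ * M * P) ∧
      M *ᵥ ![-t ^ ((q - 1) / 2), 1] = t ^ ((q + 3) / 2) • ![-t ^ ((q - 1) / 2), 1] ∧
      M *ᵥ ![t ^ ((q - 1) / 2), 1] = (-t ^ ((q + 3) / 2)) • ![t ^ ((q - 1) / 2), 1]) := by
  intro F t M
  have hp : p.Prime := Fact.out
  have hodd_iff : Odd q ↔ p ≠ 2 := by
    rw [hq, Nat.odd_pow_iff (by omega), hp.odd_iff]
    have := hp.two_le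
    omega
  have similar (hodd : Odd q) := Matrix.antidiag_pow_diagonalization_of_odd
    (isUnit_iff_ne_zero.mpr (RatFunc.X_ne_zero (K := GaloisField p r)))
    (isUnit_iff_ne_zero.mpr (Ring.two_ne_zero (by rw [ringChar.eq F p]; exact hodd_iff.mp hodd)))
    hodd
  refine ⟨⟨fun hdiag => ?_, fun hodd => ?_⟩, similar⟩
  · by_contra hodd
    obtain rfl : p = 2 := not_not.mp (mt hodd_iff.mpr hodd)
    have : CharP K 2 := charP_of_injective_algebraMap (algebraMap F K).injective 2
    obtain ⟨c, hc⟩ := hdiag.eq_scalar_of_trace_eq_zero (by simp [M, Matrix.trace_fin_two])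
    exact RatFunc.X_ne_zero (by simpa [M, t] using congrFun (congrFun hc 0) 1)
  · obtain ⟨P, hP, hD⟩ := (similar hodd).1
    exact Matrix.IsDiagonalizable.map ⟨P, hP, hD ▸ Matrix.isDiag_diagonal _⟩ _

/-- The antidiagonal block `M₁ = [[0, -t^(q+1)], [-t², 0]]` of the Atkin operator for
weight `k = q + 3` is diagonalizable over the algebraic closure iff `q` is odd;
moreover for odd `q` it is similar over `F_q(t)` itself to `diag(t^((q+3)/2), -t^((q+3)/2))`,
with eigenvectors `±t^((q-1)/2)·e₁ + e₂`. -/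
theorem stmt2 (p r : ℕ) [Fact p.Prime] (hr : 1 ≤ r) (q : ℕ) (hq : q = p ^ r)
    (K : Type*) [Field K] [Algebra (RatFunc (GaloisField p r)) K]
    [IsAlgClosure (RatFunc (GaloisField p r)) K] :
    let F := RatFunc (GaloisField p r)
    let t : F := RatFunc.X
    let M : Matrix (Fin 2) (Fin 2) F := !![0, -t ^ (q + 1); -t ^ 2, 0]
    (Matrix.IsDiagonalizable (M.map (algebraMap F K)) ↔ Odd q) ∧
    (Odd q →
      (∃ P : Matrix (Fin 2) (Fin 2) F, IsUnit P ∧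
        Matrix.diagonal ![t ^ ((q + 3) / 2), -t ^ ((q + 3) / 2)] = P⁻¹ * M * P) ∧
      M *ᵥ ![-t ^ ((q - 1) / 2), 1] = t ^ ((q + 3) / 2) • ![-t ^ ((q - 1) / 2), 1] ∧
      M *ᵥ ![t ^ ((q - 1) / 2), 1] = (-t ^ ((q + 3) / 2)) • ![t ^ ((q - 1) / 2), 1]) :=
  stmt2_general p r hr q hq K
end

section
/- Let p be a prime, r ≥ 1 an integer, q = p^r, let K be an algebraic closure of the rational function field F_p(t), t the image in K of the indeterminate, and let j ≥ 0 be an integer. Let α, β, γ be elements of the prime field F_p ⊂ K, and set M = [[(−1)^j·α·t^{j+1}, −γ·t^{j+q}], [(−1)^j·β·t^{j+1}, 0]]. If M is not the zero matrix, then M is diagonalizable over K if and only if α ≠ 0, or p is odd and βγ ≠ 0. -/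
open Matrix

/-!
Over an algebraically closed field a `2 × 2` matrix is diagonalizable exactly when its
discriminant `tr² - 4 det` is nonzero or it is scalar: a simple eigenvalue yields an eigenbasis,
while for a double eigenvalue `s` the matrix `M - s` squares to zero, and a diagonalizable
nilpotent matrix vanishes. Our `M` is not scalar (its `(1,1)` entry is `0` but `M ≠ 0`), and its
discriminant is `t^(2j+2) (α² - 4 (-1)^j βγ t^(q-1))`. As `t^(q-1)` lies outside the prime field,
this vanishes only if `α = 0` and `4βγ = 0`, i.e. `α = 0` and (`p = 2` or `βγ = 0`).
-/

namespace Matrix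

variable {n R : Type*} [Fintype n] [DecidableEq n] [CommRing R]

lemma IsDiag.eq_zero_of_isNilpotent [IsReduced R] {D : Matrix n n R} (hD : D.IsDiag)
    (hN : IsNilpotent D) : D = 0 := by
  obtain ⟨k, hk⟩ := hN
  rw [← hD.diagonal_diag, diagonal_pow, diagonal_eq_zero] at hk
  rw [← hD.diagonal_diag, diagonal_eq_zero]
  exact IsReduced.eq_zero _ ⟨k, hk⟩

lemma IsDiagonalizable.eq_zero_of_isNilpotent [IsReduced R] {N : Matrix n n R}
    (hN : N.IsDiagonalizable) (hnil : IsNilpotent N) : N = 0 := by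
  obtain ⟨P, hP, hD⟩ := hN
  obtain ⟨k, hk⟩ := hnil
  have hconj : (P⁻¹ * N * P) ^ k = P⁻¹ * N ^ k * P := by
    simpa [coe_units_inv] using Units.conj_pow hP.unit⁻¹ N k
  have hD0 : P⁻¹ * N * P = 0 := hD.eq_zero_of_isNilpotent ⟨k, by rw [hconj, hk]; simp⟩
  have hPdet := (isUnit_iff_isUnit_det P).1 hP
  calc N = P * (P⁻¹ * N * P) * P⁻¹ := by
        rw [← Matrix.mul_assoc P, mul_nonsing_inv_cancel_right P _ hPdet,
          mul_nonsing_inv_cancel_left P _ hPdet]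
    _ = 0 := by rw [hD0, Matrix.mul_zero, Matrix.zero_mul]

lemma IsDiagonalizable.sub_scalar {M : Matrix n n R} (hM : M.IsDiagonalizable) (s : R) :
    (M - scalar n s).IsDiagonalizable := by
  obtain ⟨P, hP, hD⟩ := hM
  refine ⟨P, hP, ?_⟩
  have hPdet := (isUnit_iff_isUnit_det P).1 hP
  simp only [Matrix.mul_sub, Matrix.sub_mul, scalar_apply, ← smul_one_eq_diagonal,
    Matrix.mul_smul, Matrix.smul_mul, Matrix.mul_one, nonsing_inv_mul _ hPdet]
  exact hD.sub (isDiag_one.smul s)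

lemma isDiagonalizable_of_mul_eq_mul {M P D : Matrix n n R} (hP : IsUnit P.det) (hD : D.IsDiag)
    (h : M * P = P * D) : M.IsDiagonalizable := by
  refine ⟨P, (isUnit_iff_isUnit_det P).2 hP, ?_⟩
  rwa [Matrix.mul_assoc, h, ← Matrix.mul_assoc, nonsing_inv_mul _ hP, Matrix.one_mul]

variable {K : Type*} [Field K]

lemma exists_charpoly_root_fin_two [IsAlgClosed K] (M : Matrix (Fin 2) (Fin 2) K) :
    ∃ l : K, l ^ 2 - M.trace * l + M.det = 0 := by
  obtain ⟨l, hl⟩ := IsAlgClosed.exists_root M.charpoly (by simp [charpoly_degree_eq_dim])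
  refine ⟨l, ?_⟩
  simpa [M.charpoly_fin_two] using hl

lemma isDiagonalizable_fin_two_of_root {M : Matrix (Fin 2) (Fin 2) K} {l : K}
    (hl : l ^ 2 - M.trace * l + M.det = 0) (hsimple : 2 * l - M.trace ≠ 0) :
    M.IsDiagonalizable := by
  obtain ⟨a, b, c, d, rfl⟩ : ∃ a b c d, M = !![a, b; c, d] := ⟨_, _, _, _, M.eta_fin_two⟩
  simp only [trace_fin_two_of, det_fin_two_of] at hl hsimple
  by_cases hc : c = 0
  · subst hc
    have had : d - a ≠ 0 := by
      intro had
      apply hsimple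
      have : (2 * l - (a + d)) ^ 2 = 0 := by linear_combination 4 * hl + (d - a) * had
      exact pow_eq_zero_iff two_ne_zero |>.1 this
    refine isDiagonalizable_of_mul_eq_mul (P := !![1, b; 0, d - a]) (D := diagonal ![a, d])
      (by simpa using had) (isDiag_diagonal _) ?_
    simp only [diagonal_fin_two, mul_fin_two, EmbeddingLike.apply_eq_iff_eq, vecCons_inj, and_true,
      cons_val_zero, cons_val_one]
    refine ⟨⟨?_, ?_⟩, ?_, ?_⟩ <;> ring
  · refine isDiagonalizable_of_mul_eq_mul (P := !![l - d, a - l; c, c])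
      (D := diagonal ![l, a + d - l]) ?_ (isDiag_diagonal _) ?_
    · rw [det_fin_two_of, isUnit_iff_ne_zero]
      convert mul_ne_zero hsimple hc using 1
      ring
    · simp only [diagonal_fin_two, mul_fin_two, EmbeddingLike.apply_eq_iff_eq, vecCons_inj,
        and_true, cons_val_zero, cons_val_one]
      refine ⟨⟨?_, ?_⟩, ?_, ?_⟩
      · linear_combination -hl
      · linear_combination -hl
      · ring
      · ring

lemma sq_sub_scalar_fin_two_eq_zero {M : Matrix (Fin 2) (Fin 2) K} {s : K}
    (hs : s ^ 2 - M.trace * s + M.det = 0) (htrace : 2 * s = M.trace) :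
    (M - scalar (Fin 2) s) ^ 2 = 0 := by
  obtain ⟨a, b, c, d, rfl⟩ : ∃ a b c d, M = !![a, b; c, d] := ⟨_, _, _, _, M.eta_fin_two⟩
  simp only [trace_fin_two_of, det_fin_two_of] at hs htrace
  have hsub : !![a, b; c, d] - scalar (Fin 2) s = !![a - s, b; c, d - s] := by
    ext i j
    fin_cases i <;> fin_cases j <;> simp
  rw [hsub, sq, mul_fin_two, eta_fin_two (0 : Matrix (Fin 2) (Fin 2) K)]
  simp only [Matrix.zero_apply, EmbeddingLike.apply_eq_iff_eq, vecCons_inj, and_true]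
  refine ⟨⟨?_, ?_⟩, ?_, ?_⟩
  · linear_combination -hs + (s - a) * htrace
  · linear_combination -b * htrace
  · linear_combination -c * htrace
  · linear_combination -hs + (s - d) * htrace

theorem isDiagonalizable_fin_two_iff [IsAlgClosed K] (M : Matrix (Fin 2) (Fin 2) K) :
    M.IsDiagonalizable ↔ M.discr ≠ 0 ∨ ∃ s, M = scalar (Fin 2) s := by
  obtain ⟨s, hs⟩ := M.exists_charpoly_root_fin_two
  have hsq : (2 * s - M.trace) ^ 2 = M.discr := by
    rw [discr_fin_two]
    linear_combination 4 * hs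
  constructor
  · intro hM
    by_contra! h
    have htrace : 2 * s = M.trace := by
      rw [← sub_eq_zero, ← pow_eq_zero_iff two_ne_zero, hsq, h.1]
    exact h.2 s <| sub_eq_zero.1 <|
      (hM.sub_scalar s).eq_zero_of_isNilpotent ⟨2, sq_sub_scalar_fin_two_eq_zero hs htrace⟩
  · rintro (h | ⟨s, rfl⟩)
    · exact isDiagonalizable_fin_two_of_root hs fun h0 => h (by rw [← hsq, h0, zero_pow two_ne_zero])
    · exact ⟨1, isUnit_one, by simp⟩

end Matrix

lemma pow_char_eq_self_of_mem_bot {K : Type*} [Field K] (p : ℕ) [Fact p.Prime] [CharP K p]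
    {x : K} (hx : x ∈ (⊥ : Subfield K)) : x ^ p = x := by
  simpa [frobenius_def] using
    (bot_le : ⊥ ≤ RingHom.eqLocusField (frobenius K p) (RingHom.id K)) hx

lemma Subfield.add_mul_eq_zero_iff_of_notMem {K : Type*} [Field K] {S : Subfield K} {u v x : K}
    (hu : u ∈ S) (hv : v ∈ S) (hx : x ∉ S) : u + v * x = 0 ↔ u = 0 ∧ v = 0 := by
  refine ⟨fun h => ?_, fun ⟨hu0, hv0⟩ => by simp [hu0, hv0]⟩
  by_cases hv0 : v = 0
  · simpa [hv0] using h
  · refine absurd ?_ hx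
    rw [show x = -u / v by field_simp; linear_combination h]
    exact div_mem (neg_mem hu) hv

lemma algebraMap_X_pow_notMem_bot (p : ℕ) [Fact p.Prime] (K : Type*) [Field K]
    [Algebra (RatFunc (ZMod p)) K] {m : ℕ} (hm : m ≠ 0) :
    algebraMap (RatFunc (ZMod p)) K RatFunc.X ^ m ∉ (⊥ : Subfield K) := by
  have : CharP K p := charP_of_injective_algebraMap (algebraMap (RatFunc (ZMod p)) K).injective p
  intro hmem
  have hK := pow_char_eq_self_of_mem_bot p hmem
  have hinj : Function.Injective (algebraMap (RatFunc (ZMod p)) K ∘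
      algebraMap (Polynomial (ZMod p)) (RatFunc (ZMod p))) :=
    (algebraMap _ K).injective.comp (RatFunc.algebraMap_injective (ZMod p))
  have hpoly : ((Polynomial.X : Polynomial (ZMod p)) ^ m) ^ p = Polynomial.X ^ m :=
    hinj (by simpa [RatFunc.algebraMap_X] using hK)
  have hdeg := congrArg Polynomial.natDegree hpoly
  simp only [← pow_mul, Polynomial.natDegree_X_pow] at hdeg
  have := (Fact.out : p.Prime).two_le
  nlinarith [Nat.pos_of_ne_zero hm]

lemma CharP.four_ne_zero_iff_odd (K : Type*) [Field K] (p : ℕ) [Fact p.Prime] [CharP K p] :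
    (4 : K) ≠ 0 ↔ Odd p := by
  have hp : p.Prime := Fact.out
  rw [← Nat.not_even_iff_odd, hp.even_iff, not_iff_not,
    show (4 : K) = ((2 ^ 2 : ℕ) : K) by norm_num, CharP.cast_eq_zero_iff K p]
  exact ⟨fun h => (Nat.prime_dvd_prime_iff_eq hp Nat.prime_two).1 (hp.dvd_of_dvd_pow h),
    fun h => by subst h; norm_num⟩

/-- The general dimension-2 block `M_j` of the Atkin operator `U_t`, with coefficients
`α, β, γ` in the prime field `F_p ⊂ K`: if `M ≠ 0`, then `M` is diagonalizable over the
algebraic closure `K` of `F_p(t)` iff `α ≠ 0`, or `p` is odd and `βγ ≠ 0`. -/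
theorem stmt3 (p r : ℕ) [Fact p.Prime] (hr : 1 ≤ r) (q : ℕ) (hq : q = p ^ r)
    (K : Type*) [Field K] [Algebra (RatFunc (ZMod p)) K] [IsAlgClosure (RatFunc (ZMod p)) K]
    (t : K) (ht : t = algebraMap (RatFunc (ZMod p)) K RatFunc.X)
    (j : ℕ) (α β γ : K)
    (hα : α ∈ (⊥ : Subfield K)) (hβ : β ∈ (⊥ : Subfield K)) (hγ : γ ∈ (⊥ : Subfield K))
    (M : Matrix (Fin 2) (Fin 2) K)
    (hM : M = !![(-1 : K) ^ j * α * t ^ (j + 1), -γ * t ^ (j + q);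
                 (-1 : K) ^ j * β * t ^ (j + 1), 0])
    (hM0 : M ≠ 0) :
    Matrix.IsDiagonalizable M ↔ (α ≠ 0 ∨ (Odd p ∧ β * γ ≠ 0)) := by
  have : IsAlgClosed K := IsAlgClosure.isAlgClosed (RatFunc (ZMod p))
  have : CharP K p := charP_of_injective_algebraMap (algebraMap (RatFunc (ZMod p)) K).injective p
  obtain ⟨m, rfl, hm⟩ : ∃ m, q = m + 1 ∧ m ≠ 0 := by
    have := hq ▸ Nat.one_lt_pow (by omega) (Fact.out : p.Prime).one_lt
    exact ⟨q - 1, by omega, by omega⟩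
  have ht0 : t ≠ 0 := ht ▸ (map_ne_zero _).2 RatFunc.X_ne_zero
  have hsign : ((-1 : K) ^ j) ^ 2 = 1 := by rw [← pow_mul, pow_mul']; simp
  have hdiscr : M.discr =
      t ^ (2 * j + 2) * (α ^ 2 + -(4 * (-1) ^ j * (β * γ)) * t ^ m) := by
    rw [discr_fin_two, hM, trace_fin_two_of, det_fin_two_of]
    linear_combination (α ^ 2 * t ^ (2 * j + 2)) * hsign
  have hnot_scalar : ¬ ∃ s, M = scalar (Fin 2) s := by
    rintro ⟨s, hs⟩
    have hs0 : s = 0 := by simpa [hM] using (congrFun (congrFun hs 1) 1).symm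
    exact hM0 (by rw [hs, hs0, map_zero])
  have hcoeff : -(4 * (-1) ^ j * (β * γ)) ∈ (⊥ : Subfield K) :=
    neg_mem (mul_mem (mul_mem (ofNat_mem _ 4) (pow_mem (neg_mem (one_mem _)) j)) (mul_mem hβ hγ))
  rw [isDiagonalizable_fin_two_iff, or_iff_left hnot_scalar, hdiscr, mul_ne_zero_iff,
    and_iff_right (pow_ne_zero _ ht0), Ne,
    Subfield.add_mul_eq_zero_iff_of_notMem (pow_mem hα 2) hcoeff
      (ht ▸ algebraMap_X_pow_notMem_bot p K hm), not_and_or, ← CharP.four_ne_zero_iff_odd K p]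
  simp
end

section
/- Let F = F_2(t) be the rational function field over the field with 2 elements and let K be an algebraic closure of F. Consider the 4×4 matrix M = [[t, 0, 0, 0], [t, 0, t³, t⁴], [t, t², 0, t⁴], [t, 0, 0, 0]] over F. Then the characteristic polynomial of M equals X·(X+t)·(X²+t⁵), and M is not diagonalizable over K. -/
/-
Expanding along the first row, the matrix has characteristic polynomial X(X - t)(X² - t⁵) over
any commutative ring. In characteristic 2, with s² = t⁵ in the algebraically closed field K, this
is X(X + t)(X + s)², so every eigenvalue is a root of X(X + t)(X + s), and a diagonalizable matrix
is annihilated by any polynomial vanishing on its eigenvalues. But the (1, 1) entry of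
M(M + t)(M + s) is t⁵(t + s), which is nonzero because s = t would force t³ = 1.
-/

open Matrix

open Polynomial

theorem Units.aeval_conj {R A : Type*} [CommSemiring R] [Semiring A] [Algebra R A] (u : Aˣ) (a : A)
    (p : R[X]) : aeval (↑u⁻¹ * a * ↑u) p = ↑u⁻¹ * aeval a p * ↑u := by
  induction p using Polynomial.induction_on' with
  | add p q hp hq => simp only [map_add, hp, hq, mul_add, add_mul]
  | monomial n c =>
    simp only [aeval_monomial, ← Algebra.smul_def, Units.conj_pow', mul_smul_comm, smul_mul_assoc]

theorem RatFunc.X_pow_ne_one {K : Type*} [Field K] {n : ℕ} (hn : n ≠ 0) :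
    (RatFunc.X : RatFunc K) ^ n ≠ 1 := by
  intro h
  have hdeg := congrArg RatFunc.intDegree h
  rw [← RatFunc.algebraMap_X, ← map_pow, RatFunc.intDegree_polynomial, RatFunc.intDegree_one] at hdeg
  simp [hn] at hdeg

namespace Matrix

variable {n R : Type*} [Fintype n] [DecidableEq n] [CommRing R]

theorem aeval_diagonal (d : n → R) (p : R[X]) :
    aeval (diagonal d) p = diagonal fun i ↦ p.eval (d i) := by
  rw [← diagonalAlgHom_apply (R := R), aeval_algHom_apply, aeval_pi_apply]
  simp [aeval_def]

theorem IsDiagonalizable.aeval_eq_zero {A : Matrix n n R} (hA : A.IsDiagonalizable) {p : R[X]}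
    (hp : ∀ x, A.charpoly.IsRoot x → p.IsRoot x) : aeval A p = 0 := by
  obtain ⟨_, ⟨u, rfl⟩, hD⟩ := hA
  set d := (u.val⁻¹ * A * u.val).diag
  have hconj : u⁻¹.val * A * u.val = diagonal d := by
    rw [coe_units_inv]; exact hD.diagonal_diag.symm
  have hroot (i : n) : p.eval (d i) = 0 := by
    refine hp _ ?_
    rw [← charpoly_units_conj' u A, ← coe_units_inv, hconj, charpoly_diagonal, IsRoot, eval_prod]
    exact Finset.prod_eq_zero (Finset.mem_univ i) (by simp)
  have h := aeval_diagonal d p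
  rw [← hconj, Units.aeval_conj] at h
  rwa [show (fun i ↦ p.eval (d i)) = 0 from funext hroot, diagonal_zero',
    Units.mul_left_eq_zero, Units.mul_right_eq_zero] at h

end Matrix

def atkinMatrix {R : Type*} [CommRing R] (t : R) : Matrix (Fin 4) (Fin 4) R :=
  !![t, 0, 0, 0; t, 0, t ^ 3, t ^ 4; t, t ^ 2, 0, t ^ 4; t, 0, 0, 0]

section

variable {R : Type*} [CommRing R]

theorem charpoly_atkinMatrix (t : R) :
    (atkinMatrix t).charpoly = X * (X - C t) * (X ^ 2 - C (t ^ 5)) := by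
  rw [charpoly, det_succ_row_zero, Fin.sum_univ_four]
  simp [atkinMatrix, charmatrix_apply, det_fin_three, Fin.succAbove, Fin.lt_def, submatrix, diagonal]
  ring

theorem map_atkinMatrix {S : Type*} [CommRing S] (f : R →+* S) (t : R) :
    (atkinMatrix t).map f = atkinMatrix (f t) := by
  ext i j; fin_cases i <;> fin_cases j <;> simp [atkinMatrix]

theorem aeval_atkinMatrix_apply_one_one (t s : R) :
    aeval (atkinMatrix t) (X * (X - C t) * (X - C s)) 1 1 = -(t + s) * t ^ 5 := by
  simp [atkinMatrix, mul_apply, Fin.sum_univ_four, algebraMap_eq_diagonal, diagonal_apply,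
    Matrix.sub_apply, vecMul, dotProduct]
  ring

end

theorem not_isDiagonalizable_atkinMatrix {K : Type*} [Field K] [IsAlgClosed K] [CharP K 2] {t : K}
    (h0 : t ≠ 0) (h3 : t ^ 3 ≠ 1) : ¬ (atkinMatrix t).IsDiagonalizable := by
  intro hdiag
  obtain ⟨s, hs⟩ := IsAlgClosed.exists_pow_nat_eq (t ^ 5) two_pos
  have hcharpoly : (atkinMatrix t).charpoly = X * (X + C t) * (X + C s) ^ 2 := by
    rw [charpoly_atkinMatrix, CharTwo.add_sq, ← C_pow, hs]
    simp only [CharTwo.sub_eq_add]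
  have hroots (x : K) (hx : (atkinMatrix t).charpoly.IsRoot x) :
      (X * (X - C t) * (X - C s)).IsRoot x := by
    simp only [hcharpoly, IsRoot, eval_mul, eval_pow, eval_add, eval_X, eval_C, mul_eq_zero,
      pow_eq_zero_iff two_ne_zero, CharTwo.add_eq_zero] at hx
    simpa only [IsRoot, eval_mul, eval_sub, eval_X, eval_C, mul_eq_zero, sub_eq_zero] using hx
  have h11 := congr_fun (congr_fun (hdiag.aeval_eq_zero hroots) 1) 1
  rw [aeval_atkinMatrix_apply_one_one] at h11
  have hst : s = -t := by
    have := (mul_eq_zero.mp h11).resolve_right (pow_ne_zero 5 h0)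
    linear_combination -this
  apply h3
  have : t ^ 2 * (t ^ 3 - 1) = 0 := by rw [hst] at hs; linear_combination -hs
  linear_combination (mul_eq_zero.mp this).resolve_left (pow_ne_zero 2 h0)

/-- The 4×4 matrix of the Atkin operator `U_t` for `q = 2`, `k = 5` has characteristic
polynomial `X(X+t)(X²+t⁵)` and is not diagonalizable over an algebraic closure of
`F₂(t)`. -/
theorem stmt6 (K : Type*) [Field K] [Algebra (RatFunc (ZMod 2)) K]
    [IsAlgClosure (RatFunc (ZMod 2)) K] :
    let F := RatFunc (ZMod 2)
    let t : F := RatFunc.X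
    let M : Matrix (Fin 4) (Fin 4) F :=
      !![t, 0, 0, 0; t, 0, t ^ 3, t ^ 4; t, t ^ 2, 0, t ^ 4; t, 0, 0, 0]
    M.charpoly = Polynomial.X * (Polynomial.X + Polynomial.C t) *
        (Polynomial.X ^ 2 + Polynomial.C (t ^ 5)) ∧
    ¬ Matrix.IsDiagonalizable (M.map (algebraMap F K)) := by
  intro F t M
  have : IsAlgClosed K := IsAlgClosure.isAlgClosed F
  have : CharP K 2 := charP_of_injective_algebraMap (algebraMap F K).injective 2
  have hM : M = atkinMatrix t := rfl
  refine ⟨?_, ?_⟩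
  · rw [hM, charpoly_atkinMatrix]
    simp only [CharTwo.sub_eq_add]
  · rw [hM, map_atkinMatrix]
    refine not_isDiagonalizable_atkinMatrix ?_ ?_
    · simpa using RatFunc.X_ne_zero
    · rw [← map_pow, ← map_one (algebraMap F K), (algebraMap F K).injective.ne_iff]
      exact RatFunc.X_pow_ne_one three_ne_zero
end

section
/- Let p be a prime, r ≥ 1 an integer, q = p^r, and let F = F_q(t) be the rational function field over the field with q elements. The 3×3 matrix M = [[t, 0, 0], [t, t^q, −t^{2q−1}], [t, 0, 0]] over F is similar over F to the diagonal matrix diag(t^q, t, 0); eigenvectors for the eigenvalues t^q, t, 0 are (0,1,0), (1, 1+t^{q−1}, 1) and (0, t^{q−1}, 1) respectively. In particular M is diagonalizable over F. -/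
/-!
Put `s = t^(q-1)`; since `q ≥ 1`, `t^q = s t` and `t^(2q-1) = s t s`, so the matrix is
`!![t, 0, 0; t, s t, -s t s; t, 0, 0]`. For this shape the three eigenvector identities hold for
arbitrary `t, s` in any commutative ring, and the eigenvectors form the columns of a matrix of
determinant `-1`, which therefore conjugates the matrix to `diag(s t, t, 0)`.
-/

open Matrix

namespace Matrix

variable {n R : Type*} [Fintype n] [DecidableEq n] [CommRing R]

theorem mul_eq_mul_diagonal_of_mulVec_eq_smul {M P : Matrix n n R} {d : n → R}
    (h : ∀ j, M *ᵥ Pᵀ j = d j • Pᵀ j) :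
    M * P = P * diagonal d := by
  ext i j
  rw [mul_diagonal, mul_comm]
  exact congrFun (h j) i

theorem eq_inv_mul_mul_of_mul_eq {M P D : Matrix n n R} (hP : IsUnit P) (h : M * P = P * D) :
    D = P⁻¹ * M * P := by
  rw [Matrix.mul_assoc, h, ← Matrix.mul_assoc,
    nonsing_inv_mul P ((isUnit_iff_isUnit_det P).mp hP), Matrix.one_mul]

theorem IsDiagonalizable.of_mul_eq_mul_diagonal {M P : Matrix n n R} {d : n → R}
    (hP : IsUnit P) (h : M * P = P * diagonal d) : M.IsDiagonalizable :=
  ⟨P, hP, eq_inv_mul_mul_of_mul_eq hP h ▸ isDiag_diagonal d⟩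

end Matrix

section AtkinBlock

variable {R : Type*} [CommRing R] (a s : R)

def atkinBlock : Matrix (Fin 3) (Fin 3) R := !![a, 0, 0; a, s * a, -(s * a * s); a, 0, 0]

def atkinEigenbasis : Matrix (Fin 3) (Fin 3) R := (of ![![0, 1, 0], ![1, 1 + s, 1], ![0, s, 1]])ᵀ

theorem atkinBlock_mulVec_eigenvector₀ :
    atkinBlock a s *ᵥ ![0, 1, 0] = (s * a) • ![0, 1, 0] := by
  ext i; fin_cases i <;> simp [atkinBlock, mulVec, dotProduct, Fin.sum_univ_three]

theorem atkinBlock_mulVec_eigenvector₁ :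
    atkinBlock a s *ᵥ ![1, 1 + s, 1] = a • ![1, 1 + s, 1] := by
  ext i; fin_cases i <;> simp [atkinBlock, mulVec, dotProduct, Fin.sum_univ_three]; ring

theorem atkinBlock_mulVec_eigenvector₂ : atkinBlock a s *ᵥ ![0, s, 1] = 0 := by
  ext i; fin_cases i <;> simp [atkinBlock, mulVec, dotProduct, Fin.sum_univ_three]

theorem atkinBlock_mul_eigenbasis :
    atkinBlock a s * atkinEigenbasis s = atkinEigenbasis s * diagonal ![s * a, a, 0] := by
  refine mul_eq_mul_diagonal_of_mulVec_eq_smul fun j => ?_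
  rw [atkinEigenbasis, transpose_transpose]
  fin_cases j
  exacts [atkinBlock_mulVec_eigenvector₀ a s, atkinBlock_mulVec_eigenvector₁ a s,
    (atkinBlock_mulVec_eigenvector₂ a s).trans (zero_smul R _).symm]

theorem isUnit_atkinEigenbasis : IsUnit (atkinEigenbasis s) := by
  rw [isUnit_iff_isUnit_det, show (atkinEigenbasis s).det = -1 by
    simp [atkinEigenbasis, det_fin_three]]
  exact isUnit_one.neg

end AtkinBlock

theorem stmt7_general (p r : ℕ) [Fact p.Prime] (q : ℕ) (hq : q = p ^ r) :
    let F := RatFunc (GaloisField p r)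
    let t : F := RatFunc.X
    let M : Matrix (Fin 3) (Fin 3) F := !![t, 0, 0; t, t ^ q, -t ^ (2 * q - 1); t, 0, 0]
    (∃ P : Matrix (Fin 3) (Fin 3) F, IsUnit P ∧
      Matrix.diagonal ![t ^ q, t, 0] = P⁻¹ * M * P) ∧
    M *ᵥ ![0, 1, 0] = t ^ q • (![0, 1, 0] : Fin 3 → F) ∧
    M *ᵥ ![1, 1 + t ^ (q - 1), 1] = t • (![1, 1 + t ^ (q - 1), 1] : Fin 3 → F) ∧
    M *ᵥ ![0, t ^ (q - 1), 1] = 0 ∧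
    Matrix.IsDiagonalizable M := by
  intro F t M
  have hq₀ : 1 ≤ q := hq ▸ Nat.one_le_pow _ _ (Fact.out : p.Prime).pos
  have ht : t ^ q = t ^ (q - 1) * t := by rw [← pow_succ, Nat.sub_add_cancel hq₀]
  have hM : M = atkinBlock t (t ^ (q - 1)) := by
    rw [atkinBlock, ← ht, ← pow_add, show q + (q - 1) = 2 * q - 1 by omega]
  rw [hM, ht]
  exact ⟨⟨_, isUnit_atkinEigenbasis _,
      eq_inv_mul_mul_of_mul_eq (isUnit_atkinEigenbasis _) (atkinBlock_mul_eigenbasis _ _)⟩,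
    atkinBlock_mulVec_eigenvector₀ _ _, atkinBlock_mulVec_eigenvector₁ _ _,
    atkinBlock_mulVec_eigenvector₂ _ _,
    .of_mul_eq_mul_diagonal (isUnit_atkinEigenbasis _) (atkinBlock_mul_eigenbasis _ _)⟩

/-- The 3×3 block of the Atkin operator `U_t` on the class `C₀` for weight `k = 2q` is
similar over `F_q(t)` to `diag(t^q, t, 0)`, with the indicated eigenvectors; in
particular it is diagonalizable over `F_q(t)`. -/
theorem stmt7 (p r : ℕ) [Fact p.Prime] (hr : 1 ≤ r) (q : ℕ) (hq : q = p ^ r) :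
    let F := RatFunc (GaloisField p r)
    let t : F := RatFunc.X
    let M : Matrix (Fin 3) (Fin 3) F := !![t, 0, 0; t, t ^ q, -t ^ (2 * q - 1); t, 0, 0]
    (∃ P : Matrix (Fin 3) (Fin 3) F, IsUnit P ∧
      Matrix.diagonal ![t ^ q, t, 0] = P⁻¹ * M * P) ∧
    M *ᵥ ![0, 1, 0] = t ^ q • (![0, 1, 0] : Fin 3 → F) ∧
    M *ᵥ ![1, 1 + t ^ (q - 1), 1] = t • (![1, 1 + t ^ (q - 1), 1] : Fin 3 → F) ∧
    M *ᵥ ![0, t ^ (q - 1), 1] = 0 ∧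
    Matrix.IsDiagonalizable M :=
  stmt7_general p r q hq
end
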